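/- Let f_1, …, f_s ∈ 𝕋[x_1,…,x_n] be nonconstant polynomials (none is of the form C c for c ∈ 𝕋). Then their common tropical zero set is nonempty: there exists a ∈ 𝕋^n with f_i(a) ∈ 𝕌̄ for every i = 1, …, s. -/

import Mathlib

/-- The extended tropical semiring `𝕋`: tangible reals `(a, false)`,
ghost reals `(a, true)`, and `none` = `-∞`. -/
def T : Type := Option (ℝ × Bool)

namespace T

/-- The tangible element of value `a`. -/
def tang (a : ℝ) : T := some (a, false)

/-- The ghost element `a^ν` of value `a`. -/
def ghost (a : ℝ) : T := some (a, true)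

/-- Tropical addition on `𝕋`. -/
noncomputable def add : T → T → T
  | none, y => y
  | some p, none => some p
  | some (a, s), some (b, t) =>
      if a < b then some (b, t) else if b < a then some (a, s) else some (a, true)

/-- Tropical multiplication on `𝕋`. -/
noncomputable def mul : T → T → T
  | none, _ => none
  | some _, none => none
  | some (a, s), some (b, t) => some (a + b, s || t)

lemma add_assoc' : ∀ x y z : T, add (add x y) z = add x (add y z) := by
  show ∀ x y z : Option (ℝ × Bool), @Eq (Option (ℝ × Bool)) (add (add x y) z) (add x (add y z))
  rintro (_ | ⟨a, s⟩) (_ | ⟨b, t⟩) (_ | ⟨c, u⟩) <;>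
    simp only [add] <;>
    (try delta T) <;>
    (try split_ifs) <;>
    (try simp only [add]) <;>
    (try split_ifs) <;>
    first
      | rfl
      | (exfalso; linarith)
      | (refine congrArg some ?_; refine Prod.ext ?_ ?_ <;>
          first | rfl | linarith | simp)

lemma add_comm' : ∀ x y : T, add x y = add y x := by
  show ∀ x y : Option (ℝ × Bool), @Eq (Option (ℝ × Bool)) (add x y) (add y x)
  rintro (_ | ⟨a, s⟩) (_ | ⟨b, t⟩) <;>
    simp only [add] <;>
    (try delta T) <;>
    (try split_ifs) <;>
    first
      | rfl
      | (exfalso; linarith)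
      | (refine congrArg some ?_; refine Prod.ext ?_ ?_ <;>
          first | rfl | linarith | simp)

lemma mul_assoc' : ∀ x y z : T, mul (mul x y) z = mul x (mul y z) := by
  show ∀ x y z : Option (ℝ × Bool), @Eq (Option (ℝ × Bool)) (mul (mul x y) z) (mul x (mul y z))
  rintro (_ | ⟨a, s⟩) (_ | ⟨b, t⟩) (_ | ⟨c, u⟩) <;>
    simp [mul, add_assoc, Bool.or_assoc]

lemma mul_comm' : ∀ x y : T, mul x y = mul y x := by
  show ∀ x y : Option (ℝ × Bool), @Eq (Option (ℝ × Bool)) (mul x y) (mul y x)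
  rintro (_ | ⟨a, s⟩) (_ | ⟨b, t⟩) <;> simp [mul, add_comm, Bool.or_comm]

lemma left_distrib' : ∀ x y z : T, mul x (add y z) = add (mul x y) (mul x z) := by
  show ∀ x y z : Option (ℝ × Bool), @Eq (Option (ℝ × Bool)) (mul x (add y z)) (add (mul x y) (mul x z))
  rintro (_ | ⟨a, s⟩) (_ | ⟨b, t⟩) (_ | ⟨c, u⟩) <;>
    simp only [add, mul] <;>
    (try delta T) <;>
    (try split_ifs) <;>
    (try simp only [add, mul]) <;>
    (try split_ifs) <;>
    first
      | rfl
      | (exfalso; linarith)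
      | (refine congrArg some ?_; refine Prod.ext ?_ ?_ <;>
          first | rfl | linarith | simp)

noncomputable instance : Zero T := ⟨none⟩
noncomputable instance : One T := ⟨some (0, false)⟩
noncomputable instance : Add T := ⟨add⟩
noncomputable instance : Mul T := ⟨mul⟩

noncomputable instance : CommSemiring T where
  add := (· + ·)
  zero := 0
  add_assoc := add_assoc'
  zero_add := fun x => by cases x <;> rfl
  add_zero := fun x => by cases x <;> rfl
  add_comm := add_comm'
  mul := (· * ·)
  one := 1
  mul_assoc := mul_assoc'
  one_mul := fun x => by
    show @Eq (Option (ℝ × Bool)) (mul (some (0, false)) x) (x)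
    rcases x with _ | ⟨a, s⟩ <;> simp [mul]
  mul_one := fun x => by
    show @Eq (Option (ℝ × Bool)) (mul x (some (0, false))) (x)
    rcases x with _ | ⟨a, s⟩ <;> simp [mul]
  mul_comm := mul_comm'
  zero_mul := fun x => by cases x <;> rfl
  mul_zero := fun x => by cases x <;> rfl
  left_distrib := left_distrib'
  right_distrib := fun x y z => by
    show mul (add x y) z = add (mul x z) (mul y z)
    rw [mul_comm', left_distrib', mul_comm' z x, mul_comm' z y]
  nsmul := nsmulRec

/-- Membership in the ghost part `𝕌̄ = 𝕌 ∪ {-∞}` of `𝕋`. -/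
def isGhost : T → Prop
  | none => True
  | some (_, s) => s = true

/-- Membership in the tangible part `ℝ ∪ {-∞}` of `𝕋`. -/
def isTangible : T → Prop
  | none => True
  | some (_, s) => s = false

/-- The underlying real value (junk value `0` at `-∞`); this is `π` on elements `≠ -∞`. -/
def val : T → ℝ
  | none => 0
  | some (a, _) => a

/-- The ghost map `ν`. -/
def nu : T → T
  | none => none
  | some (a, _) => some (a, true)

end T

namespace T

/-- The model value in the half line `[0,∞)`: `-∞ ↦ 0`, an element of value `a ↦ exp a`. -/
noncomputable def gval : T → ℝ
  | none => 0
  | some (a, _) => Real.exp a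

lemma nu_isGhost : ∀ x : T, isGhost (nu x)
  | none => trivial
  | some (_, _) => rfl

lemma gval_injOn_tang : Set.InjOn gval {x : T | isTangible x} := by
  rintro (_ | ⟨a, s⟩) hx (_ | ⟨b, t⟩) hy h <;>
    simp only [gval, Set.mem_setOf_eq, isTangible] at hx hy h
  · rfl
  · exact absurd h.symm (Real.exp_pos b).ne'
  · exact absurd h (Real.exp_pos a).ne'
  · rw [Real.exp_eq_exp] at h; subst hx; subst hy; subst h; rfl

lemma gval_injOn_ghost : Set.InjOn gval {x : T | isGhost x} := by
  rintro (_ | ⟨a, s⟩) hx (_ | ⟨b, t⟩) hy h <;>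
    simp only [gval, Set.mem_setOf_eq, isGhost] at hx hy h
  · rfl
  · exact absurd h.symm (Real.exp_pos b).ne'
  · exact absurd h (Real.exp_pos a).ne'
  · rw [Real.exp_eq_exp] at h; subst hx; subst hy; subst h; rfl

lemma gval_image_tang : gval '' {x : T | isTangible x} = Set.Ici 0 := by
  ext y
  constructor
  · rintro ⟨(_ | ⟨a, s⟩), hx, rfl⟩
    · exact Set.self_mem_Ici
    · exact le_of_lt (by simpa [gval] using Real.exp_pos a)
  · intro hy
    rcases eq_or_lt_of_le (Set.mem_Ici.mp hy : (0 : ℝ) ≤ y) with h | h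
    · exact ⟨none, trivial, h⟩
    · exact ⟨some (Real.log y, false), rfl, by simp [gval, Real.exp_log h]⟩

lemma gval_image_ghost : gval '' {x : T | isGhost x} = Set.Ici 0 := by
  ext y
  constructor
  · rintro ⟨(_ | ⟨a, s⟩), hx, rfl⟩
    · exact Set.self_mem_Ici
    · exact le_of_lt (by simpa [gval] using Real.exp_pos a)
  · intro hy
    rcases eq_or_lt_of_le (Set.mem_Ici.mp hy : (0 : ℝ) ≤ y) with h | h
    · exact ⟨none, trivial, h⟩
    · exact ⟨some (Real.log y, true), rfl, by simp [gval, Real.exp_log h]⟩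

/-- The closed sets of the topology on `𝕋`: both the tangible and the ghost layers are
closed in the model `[0,∞)` of `𝕌̄`, and the ghost image of the tangible layer is
contained in the set. -/
def TIsClosed (W : Set T) : Prop :=
  IsClosed (gval '' (W ∩ {x | isTangible x})) ∧
  IsClosed (gval '' (W ∩ {x | isGhost x})) ∧
  nu '' (W ∩ {x | isTangible x}) ⊆ W ∩ {x | isGhost x}

/-- The topology on `𝕋`. -/
noncomputable instance : TopologicalSpace T :=
  TopologicalSpace.ofClosed {W | TIsClosed W}
    (by
      refine ⟨?_, ?_, ?_⟩ <;> simp [TIsClosed])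
    (fun A hA => by
      rcases A.eq_empty_or_nonempty with rfl | hne
      · rw [Set.sInter_empty]
        refine ⟨?_, ?_, ?_⟩
        · rw [Set.univ_inter, gval_image_tang]; exact isClosed_Ici
        · rw [Set.univ_inter, gval_image_ghost]; exact isClosed_Ici
        · rintro y ⟨x, ⟨-, _⟩, rfl⟩
          exact ⟨trivial, nu_isGhost x⟩
      · have : Nonempty A := hne.to_subtype
        have h1 : (⋂₀ A) ∩ {x : T | isTangible x}
            = ⋂ (W : A), ((W : Set T) ∩ {x | isTangible x}) := by
          ext x
          simp only [Set.mem_inter_iff, Set.mem_sInter, Set.mem_iInter, Set.mem_setOf_eq]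
          constructor
          · rintro ⟨h, ht⟩ W; exact ⟨h W W.2, ht⟩
          · intro h
            obtain ⟨W, hW⟩ := hne
            exact ⟨fun V hV => (h ⟨V, hV⟩).1, (h ⟨W, hW⟩).2⟩
        have h2 : (⋂₀ A) ∩ {x : T | isGhost x}
            = ⋂ (W : A), ((W : Set T) ∩ {x | isGhost x}) := by
          ext x
          simp only [Set.mem_inter_iff, Set.mem_sInter, Set.mem_iInter, Set.mem_setOf_eq]
          constructor
          · rintro ⟨h, ht⟩ W; exact ⟨h W W.2, ht⟩
          · intro h
            obtain ⟨W, hW⟩ := hne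
            exact ⟨fun V hV => (h ⟨V, hV⟩).1, (h ⟨W, hW⟩).2⟩
        refine ⟨?_, ?_, ?_⟩
        · rw [h1, Set.InjOn.image_iInter_eq
            (gval_injOn_tang.mono (Set.iUnion_subset fun W => Set.inter_subset_right))]
          exact isClosed_iInter fun W => (hA W.2).1
        · rw [h2, Set.InjOn.image_iInter_eq
            (gval_injOn_ghost.mono (Set.iUnion_subset fun W => Set.inter_subset_right))]
          exact isClosed_iInter fun W => (hA W.2).2.1
        · rintro y ⟨x, ⟨hx, hxt⟩, rfl⟩
          refine ⟨fun W hW => ((hA hW).2.2 ⟨x, ⟨hx W hW, hxt⟩, rfl⟩).1, nu_isGhost x⟩)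
    (fun A hA B hB => by
      have h1 : (A ∪ B) ∩ {x : T | isTangible x}
          = (A ∩ {x | isTangible x}) ∪ (B ∩ {x | isTangible x}) :=
        Set.union_inter_distrib_right A B _
      have h2 : (A ∪ B) ∩ {x : T | isGhost x}
          = (A ∩ {x | isGhost x}) ∪ (B ∩ {x | isGhost x}) :=
        Set.union_inter_distrib_right A B _
      refine ⟨?_, ?_, ?_⟩
      · rw [h1, Set.image_union]; exact hA.1.union hB.1
      · rw [h2, Set.image_union]; exact hA.2.1.union hB.2.1
      · rintro y ⟨x, ⟨hx, hxt⟩, rfl⟩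
        rcases hx with hxA | hxB
        · have h := hA.2.2 ⟨x, ⟨hxA, hxt⟩, rfl⟩
          exact ⟨Or.inl h.1, h.2⟩
        · have h := hB.2.2 ⟨x, ⟨hxB, hxt⟩, rfl⟩
          exact ⟨Or.inr h.1, h.2⟩)

end T

/-! Evaluate every `f i` at the ghost point `(M^ν, …, M^ν)`. Each monomial of positive degree
then takes a ghost value, so only the constant term can be tangible; for `M` large, a fixed
nonconstant monomial of each `f i` outweighs the constant term, and a sum dominated by a ghost
summand is a ghost. -/

namespace T

def GhostAtLeast (r : ℝ) (x : T) : Prop := ∃ a, r ≤ a ∧ x = ghost a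

def GhostOrAtMost (r : ℝ) (x : T) : Prop := isGhost x ∨ val x ≤ r

@[simp]
lemma val_ghost (a : ℝ) : val (ghost a) = a := rfl

lemma GhostAtLeast.isGhost {r : ℝ} {x : T} (hx : GhostAtLeast r x) : isGhost x := by
  obtain ⟨a, -, rfl⟩ := hx
  rfl

lemma add_def (x y : T) : x + y = add x y := rfl

lemma add_some_some (a b : ℝ) (s t : Bool) :
    add (some (a, s)) (some (b, t)) =
      if a < b then some (b, t) else if b < a then some (a, s) else some (a, true) := rfl

lemma GhostOrAtMost.add {r : ℝ} {x y : T} (hx : GhostOrAtMost r x) (hy : GhostOrAtMost r y) :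
    GhostOrAtMost r (x + y) := by
  rw [add_def]
  rcases x with _ | ⟨a, s⟩ <;> rcases y with _ | ⟨b, t⟩
  · exact hy
  · exact hy
  · exact hx
  rw [add_some_some]
  split_ifs
  · exact hy
  · exact hx
  · exact Or.inl rfl

lemma GhostOrAtMost.sum {r : ℝ} {ι : Type*} {s : Finset ι} {g : ι → T}
    (hg : ∀ i ∈ s, GhostOrAtMost r (g i)) : GhostOrAtMost r (∑ i ∈ s, g i) :=
  Finset.sum_induction g (GhostOrAtMost r) (fun _ _ => GhostOrAtMost.add) (Or.inl trivial) hg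

lemma GhostAtLeast.add {r : ℝ} {x y : T} (hx : GhostAtLeast r x) (hy : GhostOrAtMost r y) :
    GhostAtLeast r (x + y) := by
  obtain ⟨a, hra, rfl⟩ := hx
  rw [add_def]
  rcases y with _ | ⟨b, t⟩
  · exact ⟨a, hra, rfl⟩
  rw [ghost, add_some_some]
  split_ifs with hab
  · rcases hy with hy | hy
    · exact ⟨b, hra.trans hab.le, by rw [show t = true from hy]; rfl⟩
    · exact absurd (hra.trans_lt hab) (not_lt.mpr hy)
  · exact ⟨a, hra, rfl⟩
  · exact ⟨a, hra, rfl⟩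

lemma mul_ghost {x : T} (hx : x ≠ 0) (a : ℝ) : x * ghost a = ghost (val x + a) := by
  rcases x with _ | ⟨c, s⟩
  · exact absurd rfl hx
  · show (some (c + a, s || true) : T) = some (c + a, true)
    rw [Bool.or_true]

lemma isGhost_mul_ghost (x : T) (a : ℝ) : isGhost (x * ghost a) := by
  rcases eq_or_ne x 0 with rfl | hx
  · trivial
  · rw [mul_ghost hx]; rfl

lemma ghost_pow (a : ℝ) {k : ℕ} (hk : k ≠ 0) : ghost a ^ k = ghost (k * a) := by
  induction k with
  | zero => exact absurd rfl hk
  | succ k ih =>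
    rcases eq_or_ne k 0 with rfl | hk'
    · simp
    · rw [pow_succ, ih hk', mul_ghost (by rintro ⟨⟩), val_ghost]
      push_cast
      ring_nf

end T

open MvPolynomial in
lemma MvPolynomial.exists_mem_support_ne_zero {R σ : Type*} [CommSemiring R]
    {f : MvPolynomial σ R} (hf : ∀ c, f ≠ C c) : ∃ d ∈ f.support, d ≠ 0 := by
  by_contra! h
  refine hf (f.coeff 0) (totalDegree_eq_zero_iff_eq_C.mp ?_)
  refine Nat.eq_zero_of_le_zero (Finset.sup_le fun d hd => ?_)
  simp [h d hd]

namespace T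

open MvPolynomial

variable {σ : Type*}

lemma eval_const_ghost (M : ℝ) (f : MvPolynomial σ T) :
    eval (fun _ => ghost M) f = ∑ d ∈ f.support, f.coeff d * ghost M ^ d.degree := by
  rw [eval_eq]
  refine Finset.sum_congr rfl fun d _ => ?_
  rw [Finset.prod_pow_eq_pow_sum, Finsupp.degree_apply]

lemma isGhost_eval_const_ghost {f : MvPolynomial σ T} {d₀ : σ →₀ ℕ} (hd₀ : d₀ ∈ f.support)
    (hd₀_ne : d₀ ≠ 0) {M : ℝ} (hM : 0 ≤ M) (hM_large : val (f.coeff 0) ≤ val (f.coeff d₀) + M) :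
    isGhost (eval (fun _ => ghost M) f) := by
  classical
  rw [eval_const_ghost, ← Finset.add_sum_erase _ _ hd₀]
  refine (GhostAtLeast.add (r := val (f.coeff 0)) ?_ (GhostOrAtMost.sum fun d _ => ?_)).isGhost
  · have hdeg : d₀.degree ≠ 0 := (Finsupp.degree_eq_zero_iff d₀).not.mpr hd₀_ne
    rw [ghost_pow M hdeg, mul_ghost (mem_support_iff.mp hd₀)]
    refine ⟨_, ?_, rfl⟩
    have : M ≤ d₀.degree * M :=
      le_mul_of_one_le_left hM (Nat.one_le_cast.mpr (Nat.one_le_iff_ne_zero.mpr hdeg))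
    linarith
  · rcases eq_or_ne d 0 with rfl | hd
    · right
      rw [map_zero, pow_zero, mul_one]
    · left
      rw [ghost_pow M ((Finsupp.degree_eq_zero_iff d).not.mpr hd)]
      exact isGhost_mul_ghost _ _

end T

/-- Theorem `thm:commonZero`: finitely many nonconstant polynomials
have a common tropical root. -/
theorem tropical_common_root (n s : ℕ) (f : Fin s → MvPolynomial (Fin n) T)
    (h : ∀ i, ∀ c : T, f i ≠ MvPolynomial.C c) :
    ∃ a : Fin n → T, ∀ i, T.isGhost (MvPolynomial.eval a (f i)) := by
  choose d hd hd_ne using fun i => MvPolynomial.exists_mem_support_ne_zero (h i)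
  obtain ⟨M, hM⟩ := Finite.exists_le fun i => T.val ((f i).coeff 0) - T.val ((f i).coeff (d i))
  refine ⟨fun _ => T.ghost (max M 0), fun i =>
    T.isGhost_eval_const_ghost (hd i) (hd_ne i) (le_max_right M 0) ?_⟩
  linarith [hM i, le_max_left M 0]
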